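/- Suppose f : ℝⁿ → ℝ is continuously differentiable and bounded below, and a line search from point u along descent direction p finds β satisfying the Wolfe conditions; then such β exists whenever 0 < c₁ < c₂ < 1, f is bounded below along the ray {u + βp : β > 0}, and f is continuously differentiable. -/

import Mathlib

/-!
Subtracting the Armijo line, `g β = f (u + β • p) - c₁ β ⟪∇f u, p⟫` has `g' 0 = (1 - c₁) ⟪∇f u, p⟫ < 0`,
while boundedness of `f` along the ray makes `g b ≥ g 0` for some `b > 0`. The minimum of `g` on
`[0, b]` is therefore attained at an interior point `β`, where `g β < g 0` is the sufficient
decrease condition and `g' β = 0` gives `⟪∇f (u + β • p), p⟫ = c₁ ⟪∇f u, p⟫ ≥ c₂ ⟪∇f u, p⟫`.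
-/

open Set Filter Topology
open scoped RealInnerProductSpace

theorem HasDerivAt.eventually_nhdsGT_lt {f : ℝ → ℝ} {f' x : ℝ} (hf : HasDerivAt f f' x)
    (hf' : f' < 0) : ∀ᶠ y in 𝓝[>] x, f y < f x := by
  have hslope : Tendsto (slope f x) (𝓝[>] x) (𝓝 f') :=
    (hasDerivAt_iff_tendsto_slope.mp hf).mono_left
      (nhdsWithin_mono x fun y hy => ne_of_gt hy)
  filter_upwards [hslope.eventually_lt_const hf', self_mem_nhdsWithin] with y hneg hxy
  rw [slope_def_field, div_neg_iff] at hneg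
  rcases hneg with ⟨-, hyx⟩ | ⟨hfy, -⟩
  · linarith [mem_Ioi.mp hxy]
  · linarith

theorem exists_mem_Ioo_lt_hasDerivAt_eq_zero {g g' : ℝ → ℝ} {a b : ℝ} (hab : a < b)
    (hg : ∀ x ∈ Icc a b, HasDerivAt g (g' x) x) (hga' : g' a < 0) (hgab : g a ≤ g b) :
    ∃ c ∈ Ioo a b, g c < g a ∧ g' c = 0 := by
  obtain ⟨y, hy, hgy⟩ : ∃ y ∈ Ioo a b, g y < g a :=
    (((hg a (left_mem_Icc.2 hab.le)).eventually_nhdsGT_lt hga').and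
      (Ioo_mem_nhdsGT hab)).exists.imp fun y h => ⟨h.2, h.1⟩
  obtain ⟨c, hc, hmin⟩ : ∃ c ∈ Icc a b, IsMinOn g (Icc a b) c :=
    isCompact_Icc.exists_isMinOn (nonempty_Icc.2 hab.le)
      fun x hx => (hg x hx).continuousAt.continuousWithinAt
  have hgc : g c < g a := (hmin (Ioo_subset_Icc_self hy)).trans_lt hgy
  have hc' : c ∈ Ioo a b :=
    ⟨hc.1.lt_of_ne (by rintro rfl; exact hgc.false),
      hc.2.lt_of_ne (by rintro rfl; exact (hgc.trans_le hgab).false)⟩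
  exact ⟨c, hc', hgc,
    (hmin.isLocalMin (Icc_mem_nhds hc'.1 hc'.2)).hasDerivAt_eq_zero (hg c hc)⟩

theorem exists_pos_line_lt_of_bddBelow_image_Ioi {φ : ℝ → ℝ} (hφ : BddBelow (φ '' Ioi 0))
    {s : ℝ} (hs : s < 0) (c : ℝ) : ∃ b, 0 < b ∧ c + s * b < φ b := by
  obtain ⟨m, hm⟩ := hφ
  have hline : Tendsto (fun b => c + s * b) atTop atBot :=
    tendsto_atBot_add_const_left _ c (tendsto_id.const_mul_atTop_of_neg hs)
  obtain ⟨b, hbm, hb⟩ := ((hline.eventually_lt_atBot m).and (eventually_gt_atTop 0)).exists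
  exact ⟨b, hb, hbm.trans_le (hm ⟨b, hb, rfl⟩)⟩

theorem exists_pos_armijo_lt_and_hasDerivAt_eq {φ φ' : ℝ → ℝ}
    (hφ : ∀ t, HasDerivAt φ (φ' t) t) (hdesc : φ' 0 < 0) (hbdd : BddBelow (φ '' Ioi 0))
    {c₁ : ℝ} (hc₁ : 0 < c₁) (hc₁' : c₁ < 1) :
    ∃ β, 0 < β ∧ φ β < φ 0 + c₁ * β * φ' 0 ∧ φ' β = c₁ * φ' 0 := by
  set g : ℝ → ℝ := fun t => φ t - t * (c₁ * φ' 0)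
  have hg : ∀ t, HasDerivAt g (φ' t - c₁ * φ' 0) t := fun t =>
    (hφ t).sub (hasDerivAt_mul_const _)
  obtain ⟨b, hb, hφb⟩ :=
    exists_pos_line_lt_of_bddBelow_image_Ioi hbdd (mul_neg_of_pos_of_neg hc₁ hdesc) (φ 0)
  obtain ⟨β, hβ, hgβ, hg'β⟩ := exists_mem_Ioo_lt_hasDerivAt_eq_zero hb (fun t _ => hg t)
    (by nlinarith) (by simp only [g]; linarith)
  simp only [g] at hgβ
  exact ⟨β, hβ.1, by linarith, by linarith⟩

theorem HasGradientAt.hasDerivAt_add_smul {F : Type*} [NormedAddCommGroup F]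
    [InnerProductSpace ℝ F] [CompleteSpace F] {f : F → ℝ} {f' u p : F} {t : ℝ}
    (hf : HasGradientAt f f' (u + t • p)) :
    HasDerivAt (fun s : ℝ => f (u + s • p)) ⟪f', p⟫ t := by
  have hline : HasDerivAt (fun s : ℝ => u + s • p) p t := by
    simpa using (hasDerivAt_id t).smul_const p |>.const_add u
  exact (hf.hasFDerivAt.comp_hasDerivAt t hline).congr_deriv (by simp)

theorem wolfe_step_exists_general (n : ℕ)
    (f : EuclideanSpace ℝ (Fin n) → ℝ)
    (hC1 : ContDiff ℝ 1 f)
    (u p : EuclideanSpace ℝ (Fin n))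
    (hdesc : ⟪gradient f u, p⟫ < 0)
    (hray : BddBelow ((fun β : ℝ => f (u + β • p)) '' (Set.Ioi 0)))
    (c₁ c₂ : ℝ) (hc₁ : 0 < c₁) (hc₁₂ : c₁ < c₂) (hc₂ : c₂ < 1) :
    ∃ β : ℝ, 0 < β ∧
      f (u + β • p) ≤ f u + c₁ * β * ⟪gradient f u, p⟫ ∧
      ⟪gradient f (u + β • p), p⟫ ≥ c₂ * ⟪gradient f u, p⟫ := by
  have hdiff : Differentiable ℝ f := hC1.differentiable one_ne_zero
  obtain ⟨β, hβ, harmijo, hcurv⟩ := exists_pos_armijo_lt_and_hasDerivAt_eq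
    (fun t => (hdiff (u + t • p)).hasGradientAt.hasDerivAt_add_smul)
    (by simpa using hdesc) hray hc₁ (hc₁₂.trans hc₂)
  simp only [zero_smul, add_zero] at harmijo hcurv
  refine ⟨β, hβ, harmijo.le, ?_⟩
  rw [hcurv]
  exact mul_le_mul_of_nonpos_right hc₁₂.le hdesc.le

theorem wolfe_step_exists (n : ℕ)
    (f : EuclideanSpace ℝ (Fin n) → ℝ)
    (hC1 : ContDiff ℝ 1 f)
    (hbdd : BddBelow (Set.range f))
    (u p : EuclideanSpace ℝ (Fin n))
    (hdesc : ⟪gradient f u, p⟫ < 0)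
    (hray : BddBelow ((fun β : ℝ => f (u + β • p)) '' (Set.Ioi 0)))
    (c₁ c₂ : ℝ) (hc₁ : 0 < c₁) (hc₁₂ : c₁ < c₂) (hc₂ : c₂ < 1) :
    ∃ β : ℝ, 0 < β ∧
      f (u + β • p) ≤ f u + c₁ * β * ⟪gradient f u, p⟫ ∧
      ⟪gradient f (u + β • p), p⟫ ≥ c₂ * ⟪gradient f u, p⟫ :=
  wolfe_step_exists_general n f hC1 u p hdesc hray c₁ c₂ hc₁ hc₁₂ hc₂
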